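/- Let x ∈ N and n' ∈ N'(w). Then the functions φ_{V₃}(x) = det [[b₀, b₁, b₂],[1, d₁, d₂],[0, b₀, b₁]] and φ_{V₄}(x) = det [[b₀, b₁, b₂, b₃],[1, d₁, d₂, d₃],[0, b₀, b₁, b₂],[0, 1, d₁, d₂]], computed from the power series coefficients of the entries of a matrix, satisfy φ_{V₃}(x·n') = φ_{V₃}(x) and φ_{V₄}(x·n') = φ_{V₄}(x); that is, these determinantal expressions are invariant under right multiplication by N'(w). -/

import Mathlib

/-!
The rows of the matrices defining `φ_{V₃}` and `φ_{V₄}` are the truncated coefficient vectors of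
`b`, `d`, `z b`, `z d` (using `d₀ = 1`). Since the upper-right entry of `n'` is divisible by `z⁴`,
the product `x n'` has, modulo `z⁴`, upper-right entry `b D` and lower-right entry `d D`, where `D`
is the lower-right entry of `n'`, with constant term `1`. On truncated coefficient vectors, multiplication by `D` is right
multiplication by the upper unitriangular Toeplitz matrix of `D`, which has determinant `1`.
-/

open PowerSeries

/-- Membership in the unipotent group `N` of the affine Kac–Moody group of type `Ã₁`:
matrices over `ℂ[[z]]` with determinant 1, constant terms of the diagonal entries
equal to `1`, and constant term of the lower-left entry equal to `0`. -/
def memN (x : Matrix (Fin 2) (Fin 2) (PowerSeries ℂ)) : Prop :=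
  x.det = 1 ∧
    constantCoeff (x 0 0) = 1 ∧ constantCoeff (x 1 1) = 1 ∧
    constantCoeff (x 1 0) = 0

/-- Membership in the subgroup `N'(w)` for `w = s₂s₁s₂s₁`: elements of `N` whose
upper-right entry is divisible by `z⁴`. -/
def memN' (x : Matrix (Fin 2) (Fin 2) (PowerSeries ℂ)) : Prop :=
  memN x ∧ (PowerSeries.X : PowerSeries ℂ) ^ 4 ∣ x 0 1

namespace PowerSeries

section Semiring

variable {R : Type*} [Semiring R]

noncomputable def truncMulMatrix (n : ℕ) (D : R⟦X⟧) : Matrix (Fin n) (Fin n) R :=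
  Matrix.of fun i j => if i ≤ j then coeff (j - i : ℕ) D else 0

noncomputable def coeffMatrix {m : Type*} (f : m → R⟦X⟧) (n : ℕ) : Matrix m (Fin n) R :=
  Matrix.of fun i j => coeff j (f i)

theorem coeff_mul_eq_sum_truncMulMatrix {n : ℕ} (f D : R⟦X⟧) (j : Fin n) :
    coeff j (f * D) = ∑ i : Fin n, coeff i f * truncMulMatrix n D i j := by
  have hrange : (Finset.range n).filter (· ≤ (j : ℕ)) = Finset.range (j + 1) := by
    ext i
    simp only [Finset.mem_filter, Finset.mem_range]
    omega
  simp only [truncMulMatrix, Matrix.of_apply, mul_ite, mul_zero, Fin.le_def]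
  rw [coeff_mul, Finset.Nat.sum_antidiagonal_eq_sum_range_succ_mk,
    Fin.sum_univ_eq_sum_range (fun i => if i ≤ (j : ℕ) then coeff i f * coeff (j - i) D else 0),
    ← Finset.sum_filter, hrange]

theorem coeffMatrix_mul {m : Type*} (f : m → R⟦X⟧) (D : R⟦X⟧) (n : ℕ) :
    coeffMatrix (fun i => f i * D) n = coeffMatrix f n * truncMulMatrix n D := by
  ext i j
  exact coeff_mul_eq_sum_truncMulMatrix (f i) D j

end Semiring

theorem coeffMatrix_congr {R m : Type*} [Ring R] {f g : m → R⟦X⟧} {n : ℕ}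
    (h : ∀ i, X ^ n ∣ g i - f i) : coeffMatrix g n = coeffMatrix f n := by
  ext i j
  have := X_pow_dvd_iff.mp (h i) j j.isLt
  rwa [map_sub, sub_eq_zero] at this

section CommRing

variable {R : Type*} [CommRing R]

theorem det_truncMulMatrix (n : ℕ) (D : R⟦X⟧) :
    (truncMulMatrix n D).det = constantCoeff D ^ n := by
  rw [Matrix.det_of_isUpperTriangular]
  · simp [truncMulMatrix]
  · intro i j (hji : j < i)
    simp [truncMulMatrix, not_le.mpr hji]

theorem det_coeffMatrix_eq_of_dvd_sub_mul {n : ℕ} {f g : Fin n → R⟦X⟧} {D : R⟦X⟧}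
    (hD : constantCoeff D = 1) (h : ∀ i, X ^ n ∣ g i - f i * D) :
    (coeffMatrix g n).det = (coeffMatrix f n).det := by
  rw [coeffMatrix_congr h, coeffMatrix_mul, Matrix.det_mul, det_truncMulMatrix, hD, one_pow,
    mul_one]

theorem X_pow_dvd_X_mul_sub_X_mul_mul {n : ℕ} {b b' D : R⟦X⟧} (h : X ^ n ∣ b' - b * D) :
    X ^ n ∣ X * b' - X * b * D := by
  rw [mul_assoc, ← mul_sub]
  exact dvd_mul_of_dvd_right h X

noncomputable def phiV3 (b d : R⟦X⟧) : R :=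
  Matrix.det !![coeff 0 b, coeff 1 b, coeff 2 b; 1, coeff 1 d, coeff 2 d; 0, coeff 0 b, coeff 1 b]

noncomputable def phiV4 (b d : R⟦X⟧) : R :=
  Matrix.det !![coeff 0 b, coeff 1 b, coeff 2 b, coeff 3 b; 1, coeff 1 d, coeff 2 d, coeff 3 d;
    0, coeff 0 b, coeff 1 b, coeff 2 b; 0, 1, coeff 1 d, coeff 2 d]

theorem phiV3_eq_det_coeffMatrix {b d : R⟦X⟧} (hd : constantCoeff d = 1) :
    phiV3 b d = (coeffMatrix ![b, d, X * b] 3).det := by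
  rw [phiV3]
  congr 1
  ext i j
  fin_cases i <;> fin_cases j <;> simp [coeffMatrix, coeff_succ_X_mul, hd]

theorem phiV4_eq_det_coeffMatrix {b d : R⟦X⟧} (hd : constantCoeff d = 1) :
    phiV4 b d = (coeffMatrix ![b, d, X * b, X * d] 4).det := by
  rw [phiV4]
  congr 1
  ext i j
  fin_cases i <;> fin_cases j <;> simp [coeffMatrix, coeff_succ_X_mul, hd]

variable {b d b' d' D : R⟦X⟧}

theorem phiV3_eq_of_dvd_sub_mul (hD : constantCoeff D = 1) (hd : constantCoeff d = 1)
    (hd' : constantCoeff d' = 1) (hb : X ^ 3 ∣ b' - b * D) (hdD : X ^ 3 ∣ d' - d * D) :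
    phiV3 b' d' = phiV3 b d := by
  rw [phiV3_eq_det_coeffMatrix hd, phiV3_eq_det_coeffMatrix hd']
  refine det_coeffMatrix_eq_of_dvd_sub_mul hD fun i => ?_
  fin_cases i
  exacts [hb, hdD, X_pow_dvd_X_mul_sub_X_mul_mul hb]

theorem phiV4_eq_of_dvd_sub_mul (hD : constantCoeff D = 1) (hd : constantCoeff d = 1)
    (hd' : constantCoeff d' = 1) (hb : X ^ 4 ∣ b' - b * D) (hdD : X ^ 4 ∣ d' - d * D) :
    phiV4 b' d' = phiV4 b d := by
  rw [phiV4_eq_det_coeffMatrix hd, phiV4_eq_det_coeffMatrix hd']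
  refine det_coeffMatrix_eq_of_dvd_sub_mul hD fun i => ?_
  fin_cases i
  exacts [hb, hdD, X_pow_dvd_X_mul_sub_X_mul_mul hb, X_pow_dvd_X_mul_sub_X_mul_mul hdD]

end CommRing

end PowerSeries

theorem Matrix.mul_fin_two_apply_one {α : Type*} [Mul α] [AddCommMonoid α]
    (x y : Matrix (Fin 2) (Fin 2) α) (i : Fin 2) :
    (x * y) i 1 = x i 1 * y 1 1 + x i 0 * y 0 1 := by
  simp [Matrix.mul_apply, Fin.sum_univ_two, add_comm]

/-- The determinantal functions `φ_{V₃}` and `φ_{V₄}` on `N`, computed from the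
power series coefficients `b_k, d_k` of the entries, are invariant under right
multiplication by `N'(w)`. -/
theorem phi_V3_V4_Nprime_invariant
    (x n' : Matrix (Fin 2) (Fin 2) (PowerSeries ℂ))
    (hx : memN x) (hn' : memN' n') :
    (let y := x * n'
     let b : ℕ → ℂ := fun k => coeff k (y 0 1)
     let d : ℕ → ℂ := fun k => coeff k (y 1 1)
     Matrix.det !![b 0, b 1, b 2; 1, d 1, d 2; 0, b 0, b 1]) =
    (let b : ℕ → ℂ := fun k => coeff k (x 0 1)
     let d : ℕ → ℂ := fun k => coeff k (x 1 1)
     Matrix.det !![b 0, b 1, b 2; 1, d 1, d 2; 0, b 0, b 1]) ∧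
    (let y := x * n'
     let b : ℕ → ℂ := fun k => coeff k (y 0 1)
     let d : ℕ → ℂ := fun k => coeff k (y 1 1)
     Matrix.det !![b 0, b 1, b 2, b 3; 1, d 1, d 2, d 3;
                   0, b 0, b 1, b 2; 0, 1, d 1, d 2]) =
    (let b : ℕ → ℂ := fun k => coeff k (x 0 1)
     let d : ℕ → ℂ := fun k => coeff k (x 1 1)
     Matrix.det !![b 0, b 1, b 2, b 3; 1, d 1, d 2, d 3;
                   0, b 0, b 1, b 2; 0, 1, d 1, d 2]) := by
  obtain ⟨-, -, hx11, hx10⟩ := hx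
  obtain ⟨⟨-, -, hD, -⟩, hB⟩ := hn'
  have hy11 : constantCoeff ((x * n') 1 1) = 1 := by
    simp [Matrix.mul_fin_two_apply_one, hx11, hx10, hD]
  have hrow : ∀ i, X ^ 4 ∣ (x * n') i 1 - x i 1 * n' 1 1 := fun i => by
    rw [Matrix.mul_fin_two_apply_one, add_sub_cancel_left]
    exact dvd_mul_of_dvd_right hB _
  have hrow3 : ∀ i, X ^ 3 ∣ (x * n') i 1 - x i 1 * n' 1 1 := fun i =>
    (pow_dvd_pow X (by norm_num)).trans (hrow i)
  exact ⟨phiV3_eq_of_dvd_sub_mul hD hx11 hy11 (hrow3 0) (hrow3 1),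
    phiV4_eq_of_dvd_sub_mul hD hx11 hy11 (hrow 0) (hrow 1)⟩
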